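/- arXiv:1010.3133 — 5 statements merged into one kernel-verified Lean document; each statement's English description precedes it below -/
import Mathlib

section
/- Let P be a PCA on the binary alphabet A = {0,1} with a finite set of cells E and transition function f of neighborhood V. If min_{x∈A^V} f(x)(0) + min_{x∈A^V} f(x)(1) > 0 (equivalently env(f)(?^V)(?) < 1), then the envelope PCA env(P) is ergodic; moreover, writing p = max(min_{x∈A^V} f(x)(0), min_{x∈A^V} f(x)(1)) > 0, from any configuration of B^E the envelope PCA reaches a monochromatic configuration in A^E in one step with probability at least p^{|E|}. -/
open Filter Topology

/-- Membership of a letter of `A = {0,1}` (coded by `Bool`) in a letter of the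
envelope alphabet `B = {𝟎, 𝟏, ?}` (coded by `Option Bool`, with `none = ?`). -/
def memB (b : Bool) (o : Option Bool) : Prop := o = none ∨ o = some b

/-- The envelope transition function `env(f)` of a binary transition
function `f`. -/
noncomputable def envf {V : Type*} (f : (V → Bool) → Bool → ℝ)
    (y : V → Option Bool) : Option Bool → ℝ
  | some false => sInf ((fun x => f x false) '' {x : V → Bool | ∀ v, memB (x v) (y v)})
  | some true => sInf ((fun x => f x true) '' {x : V → Bool | ∀ v, memB (x v) (y v)})
  | none => 1 - sInf ((fun x => f x false) '' {x : V → Bool | ∀ v, memB (x v) (y v)})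
              - sInf ((fun x => f x true) '' {x : V → Bool | ∀ v, memB (x v) (y v)})

/-- The transition matrix of the envelope PCA on a finite set of cells `E`:
all cells are updated independently according to `env(f)` applied to the
neighborhood `k + V`. -/
noncomputable def envT {E : Type*} [Fintype E] [AddCommSemigroup E] (V : Finset E)
    (f : (V → Bool) → Bool → ℝ) :
    Matrix (E → Option Bool) (E → Option Bool) ℝ :=
  Matrix.of fun c d => ∏ k : E, envf f (fun v : V => c (k + v.1)) (d k)

section Doeblin
variable {S : Type*} [Fintype S] [DecidableEq S]

variable {S : Type*} [Fintype S] [DecidableEq S]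

lemma contraction_l1 (T : Matrix S S ℝ) (hT0 : ∀ c d, 0 ≤ T c d)
    (hT1 : ∀ c, ∑ d, T c d = 1) (d0 : S) (ε : ℝ) (hdoe : ∀ c, ε ≤ T c d0)
    (η : S → ℝ) (hη : ∑ c, η c = 0) :
    ∑ d, |∑ c, η c * T c d| ≤ (1 - ε) * ∑ c, |η c| := by
  have hT' : ∀ c d, 0 ≤ T c d - if d = d0 then ε else 0 := by
    intro c d
    by_cases h : d = d0
    · subst h; simpa using sub_nonneg.mpr (hdoe c)
    · simpa [h] using hT0 c d
  have key : ∀ d, ∑ c, η c * T c d = ∑ c, η c * (T c d - if d = d0 then ε else 0) := by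
    intro d
    simp only [mul_sub]
    rw [Finset.sum_sub_distrib, ← Finset.sum_mul, hη, zero_mul, sub_zero]
  calc ∑ d, |∑ c, η c * T c d|
      ≤ ∑ d, ∑ c, |η c| * (T c d - if d = d0 then ε else 0) := by
        refine Finset.sum_le_sum fun d _ => ?_
        rw [key d]
        refine (Finset.abs_sum_le_sum_abs _ _).trans (Finset.sum_le_sum fun c _ => ?_)
        rw [abs_mul, abs_of_nonneg (hT' c d)]
    _ = ∑ c, |η c| * (1 - ε) := by
        rw [Finset.sum_comm]
        refine Finset.sum_congr rfl fun c _ => ?_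
        rw [← Finset.mul_sum, Finset.sum_sub_distrib, hT1, Finset.sum_ite_eq']
        simp
    _ = (1 - ε) * ∑ c, |η c| := by rw [← Finset.sum_mul, mul_comm]

lemma doeblin (T : Matrix S S ℝ) (hT0 : ∀ c d, 0 ≤ T c d)
    (hT1 : ∀ c, ∑ d, T c d = 1) (d0 : S) (ε : ℝ) (hε : 0 < ε)
    (hdoe : ∀ c, ε ≤ T c d0) :
    ∃ π : S → ℝ, (∀ c, 0 ≤ π c) ∧ (∑ c, π c = 1) ∧
      (∀ d, ∑ c, π c * T c d = π d) ∧
      (∀ ρ : S → ℝ, (∀ c, 0 ≤ ρ c) → (∑ c, ρ c = 1) → (∀ d, ∑ c, ρ c * T c d = ρ d) → ρ = π) ∧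
      (∀ μ : S → ℝ, (∀ c, 0 ≤ μ c) → (∑ c, μ c = 1) →
        ∀ d, Tendsto (fun n => ∑ c, μ c * (T ^ n) c d) atTop (𝓝 (π d))) := by
  have hε1 : ε ≤ 1 := by
    calc ε ≤ T d0 d0 := hdoe d0
    _ ≤ ∑ d, T d0 d := Finset.single_le_sum (fun d _ => hT0 d0 d) (Finset.mem_univ d0)
    _ = 1 := hT1 d0
  have hr0 : 0 ≤ 1 - ε := by linarith
  have hr1 : 1 - ε < 1 := by linarith
  -- basic facts about powers
  have hTn0 : ∀ n c d, 0 ≤ (T ^ n) c d := by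
    intro n
    induction n with
    | zero => intro c d; rw [pow_zero, Matrix.one_apply]; positivity
    | succ n ih =>
      intro c d
      rw [pow_succ, Matrix.mul_apply]
      exact Finset.sum_nonneg fun e _ => mul_nonneg (ih c e) (hT0 e d)
  have hrow : ∀ n c, ∑ d, (T ^ n) c d = 1 := by
    intro n
    induction n with
    | zero => intro c; simp [Matrix.one_apply]
    | succ n ih =>
      intro c
      simp only [pow_succ, Matrix.mul_apply]
      rw [Finset.sum_comm]
      calc ∑ e, ∑ d, (T ^ n) c e * T e d = ∑ e, (T ^ n) c e * ∑ d, T e d := by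
            simp [Finset.mul_sum]
        _ = 1 := by simp [hT1, ih]
  have hstep : ∀ (μ : S → ℝ) n d, ∑ c, μ c * (T ^ (n + 1)) c d
      = ∑ e, (∑ c, μ c * (T ^ n) c e) * T e d := by
    intro μ n d
    simp only [pow_succ, Matrix.mul_apply, Finset.mul_sum, Finset.sum_mul]
    rw [Finset.sum_comm]
    exact Finset.sum_congr rfl fun e _ => Finset.sum_congr rfl fun c _ => by ring
  have hpre : ∀ (μ : S → ℝ) n d, ∑ c, μ c * (T ^ (n + 1)) c d
      = ∑ c, (∑ e, μ e * T e c) * (T ^ n) c d := by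
    intro μ n d
    simp only [pow_succ', Matrix.mul_apply, Finset.mul_sum, Finset.sum_mul]
    rw [Finset.sum_comm]
    exact Finset.sum_congr rfl fun c _ => Finset.sum_congr rfl fun e _ => by ring
  have hsumpres : ∀ (μ : S → ℝ) n, ∑ d, (∑ c, μ c * (T ^ n) c d) = ∑ c, μ c := by
    intro μ n
    rw [Finset.sum_comm]
    calc ∑ c, ∑ d, μ c * (T ^ n) c d = ∑ c, μ c * ∑ d, (T ^ n) c d := by
          simp [Finset.mul_sum]
      _ = ∑ c, μ c := by simp [hrow]
  have hcontrN : ∀ (η : S → ℝ), ∑ c, η c = 0 → ∀ n,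
      ∑ d, |∑ c, η c * (T ^ n) c d| ≤ (1 - ε) ^ n * ∑ c, |η c| := by
    intro η hη n
    induction n with
    | zero => simp [Matrix.one_apply]
    | succ n ih =>
      calc ∑ d, |∑ c, η c * (T ^ (n + 1)) c d|
          = ∑ d, |∑ e, (∑ c, η c * (T ^ n) c e) * T e d| := by
            simp only [hstep]
        _ ≤ (1 - ε) * ∑ e, |∑ c, η c * (T ^ n) c e| :=
            contraction_l1 T hT0 hT1 d0 ε hdoe _ (by rw [hsumpres η n, hη])
        _ ≤ (1 - ε) * ((1 - ε) ^ n * ∑ c, |η c|) := by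
            exact mul_le_mul_of_nonneg_left ih hr0
        _ = (1 - ε) ^ (n + 1) * ∑ c, |η c| := by ring
  -- the iterates starting from the Dirac mass at d0
  set u : S → ℝ := fun c => if c = d0 then 1 else 0 with hu
  have hu0 : ∀ c, 0 ≤ u c := by intro c; simp only [hu]; positivity
  have hu1 : ∑ c, u c = 1 := by simp [hu]
  set A : ℕ → S → ℝ := fun n d => ∑ c, u c * (T ^ n) c d with hA
  have hA0 : ∀ n d, 0 ≤ A n d := fun n d =>
    Finset.sum_nonneg fun c _ => mul_nonneg (hu0 c) (hTn0 n c d)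
  have hA1 : ∀ n, ∑ d, A n d = 1 := fun n => by rw [hA]; simp only; rw [hsumpres, hu1]
  set C : ℝ := ∑ c, |A 1 c - u c| with hC
  have hCn : 0 ≤ C := Finset.sum_nonneg fun c _ => abs_nonneg _
  have hdiff : ∀ n d, A (n + 1) d - A n d = ∑ c, (A 1 c - u c) * (T ^ n) c d := by
    intro n d
    rw [hA]
    simp only
    rw [hpre u n d, ← Finset.sum_sub_distrib]
    refine Finset.sum_congr rfl fun c _ => ?_
    rw [sub_mul, pow_one]
  have hdiffsum : ∑ c, (A 1 c - u c) = 0 := by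
    rw [Finset.sum_sub_distrib, hA1 1, hu1, sub_self]
  have hdistb : ∀ n d, |A (n + 1) d - A n d| ≤ (1 - ε) ^ n * C := by
    intro n d
    rw [hdiff n d]
    calc |∑ c, (A 1 c - u c) * (T ^ n) c d|
        ≤ ∑ d', |∑ c, (A 1 c - u c) * (T ^ n) c d'| :=
          Finset.single_le_sum (f := fun d' => |∑ c, (A 1 c - u c) * (T ^ n) c d'|)
            (fun d' _ => abs_nonneg _) (Finset.mem_univ d)
      _ ≤ (1 - ε) ^ n * C := hcontrN _ hdiffsum n
  have hcauchy : CauchySeq A := by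
    apply cauchySeq_of_le_geometric (1 - ε) C hr1
    intro n
    rw [dist_pi_le_iff (by positivity)]
    intro d
    rw [Real.dist_eq, abs_sub_comm]
    calc |A (n + 1) d - A n d| ≤ (1 - ε) ^ n * C := hdistb n d
      _ = C * (1 - ε) ^ n := mul_comm _ _
  obtain ⟨π, hπ⟩ := cauchySeq_tendsto_of_complete hcauchy
  have hπd : ∀ d, Tendsto (fun n => A n d) atTop (𝓝 (π d)) := fun d =>
    (tendsto_pi_nhds.mp hπ) d
  have hπ0 : ∀ c, 0 ≤ π c := fun c => ge_of_tendsto' (hπd c) (fun n => hA0 n c)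
  have hπ1 : ∑ c, π c = 1 := by
    have h1 : Tendsto (fun n => ∑ d, A n d) atTop (𝓝 (∑ d, π d)) :=
      tendsto_finset_sum _ fun d _ => hπd d
    have h2 : Tendsto (fun n : ℕ => (1 : ℝ)) atTop (𝓝 1) := tendsto_const_nhds
    have := tendsto_nhds_unique h1 (by simpa only [hA1] using h2)
    linarith [this]
  have hπinv : ∀ d, ∑ c, π c * T c d = π d := by
    intro d
    have h1 : Tendsto (fun n => A (n + 1) d) atTop (𝓝 (π d)) :=
      (hπd d).comp (tendsto_add_atTop_nat 1)
    have h2 : Tendsto (fun n => ∑ e, A n e * T e d) atTop (𝓝 (∑ e, π e * T e d)) :=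
      tendsto_finset_sum _ fun e _ => (hπd e).mul_const _
    have h3 : (fun n => A (n + 1) d) = fun n => ∑ e, A n e * T e d := by
      funext n; exact hstep u n d
    rw [h3] at h1
    exact (tendsto_nhds_unique h1 h2).symm
  have hπTn : ∀ n d, ∑ c, π c * (T ^ n) c d = π d := by
    intro n
    induction n with
    | zero => intro d; simp [Matrix.one_apply]
    | succ n ih =>
      intro d
      rw [hstep π n d]
      calc ∑ e, (∑ c, π c * (T ^ n) c e) * T e d = ∑ e, π e * T e d := by
            exact Finset.sum_congr rfl fun e _ => by rw [ih e]
        _ = π d := hπinv d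
  have huniq : ∀ ρ : S → ℝ, (∀ c, 0 ≤ ρ c) → (∑ c, ρ c = 1) →
      (∀ d, ∑ c, ρ c * T c d = ρ d) → ρ = π := by
    intro ρ _ hρ1 hρinv
    have hzero : ∑ c, (ρ c - π c) = 0 := by
      rw [Finset.sum_sub_distrib, hρ1, hπ1, sub_self]
    have hfix : ∀ d, ∑ c, (ρ c - π c) * T c d = ρ d - π d := by
      intro d
      calc ∑ c, (ρ c - π c) * T c d = ∑ c, ρ c * T c d - ∑ c, π c * T c d := by
            rw [← Finset.sum_sub_distrib]
            exact Finset.sum_congr rfl fun c _ => by ring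
        _ = ρ d - π d := by rw [hρinv d, hπinv d]
    have hL : ∑ d, |ρ d - π d| ≤ (1 - ε) * ∑ c, |ρ c - π c| := by
      have := contraction_l1 T hT0 hT1 d0 ε hdoe (fun c => ρ c - π c) hzero
      simpa only [hfix] using this
    have hLn : 0 ≤ ∑ d, |ρ d - π d| := Finset.sum_nonneg fun d _ => abs_nonneg _
    have hL0 : ∑ d, |ρ d - π d| = 0 := by nlinarith
    funext d
    have := (Finset.sum_eq_zero_iff_of_nonneg (fun d _ => abs_nonneg (ρ d - π d))).mp hL0
      d (Finset.mem_univ d)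
    have := abs_eq_zero.mp this
    linarith
  refine ⟨π, hπ0, hπ1, hπinv, huniq, ?_⟩
  intro μ hμ0 hμ1 d
  have hzero : ∑ c, (μ c - π c) = 0 := by
    rw [Finset.sum_sub_distrib, hμ1, hπ1, sub_self]
  have hbound : ∀ n, |(∑ c, μ c * (T ^ n) c d) - π d|
      ≤ (1 - ε) ^ n * ∑ c, |μ c - π c| := by
    intro n
    have heq : (∑ c, μ c * (T ^ n) c d) - π d = ∑ c, (μ c - π c) * (T ^ n) c d := by
      rw [← hπTn n d, ← Finset.sum_sub_distrib]
      exact Finset.sum_congr rfl fun c _ => by ring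
    rw [heq]
    calc |∑ c, (μ c - π c) * (T ^ n) c d|
        ≤ ∑ d', |∑ c, (μ c - π c) * (T ^ n) c d'| :=
          Finset.single_le_sum (f := fun d' => |∑ c, (μ c - π c) * (T ^ n) c d'|)
            (fun d' _ => abs_nonneg _) (Finset.mem_univ d)
      _ ≤ (1 - ε) ^ n * ∑ c, |μ c - π c| := hcontrN _ hzero n
  rw [tendsto_iff_dist_tendsto_zero]
  refine squeeze_zero (g := fun n => (1 - ε) ^ n * ∑ c, |μ c - π c|)
    (fun n => dist_nonneg) (fun n => ?_) ?_
  · rw [Real.dist_eq]; exact hbound n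
  · have h : Tendsto (fun n : ℕ => (1 - ε) ^ n) atTop (𝓝 0) :=
      tendsto_pow_atTop_nhds_zero_of_lt_one hr0 hr1
    simpa using h.mul_const (∑ c, |μ c - π c|)

end Doeblin

section EnvFacts
variable {V : Type*} (f : (V → Bool) → Bool → ℝ)

lemma memB_getD (y : V → Option Bool) :
    (fun v => (y v).getD false) ∈ {x : V → Bool | ∀ v, memB (x v) (y v)} := by
  intro v
  cases h : y v with
  | none => exact Or.inl rfl
  | some a => exact Or.inr (by simp [h])

lemma envf_some (y : V → Option Bool) (b : Bool) :
    envf f y (some b) = sInf ((fun x => f x b) '' {x : V → Bool | ∀ v, memB (x v) (y v)}) := by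
  cases b <;> rfl

variable (hpos : ∀ x b, 0 ≤ f x b) (hsum : ∀ x, f x false + f x true = 1)

include hpos in
lemma envf_some_nonneg (y : V → Option Bool) (b : Bool) : 0 ≤ envf f y (some b) := by
  rw [envf_some]
  exact Real.sInf_nonneg (by rintro _ ⟨x, -, rfl⟩; exact hpos x b)

include hpos in
lemma envf_some_ge (y : V → Option Bool) (b : Bool) :
    sInf (Set.range fun x => f x b) ≤ envf f y (some b) := by
  rw [envf_some]
  refine csInf_le_csInf ⟨0, ?_⟩ ⟨_, Set.mem_image_of_mem _ (memB_getD y)⟩ ?_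
  · rintro _ ⟨x, rfl⟩; exact hpos x b
  · rintro _ ⟨x, -, rfl⟩; exact ⟨x, rfl⟩

include hpos hsum in
lemma envf_sum (y : V → Option Bool) : ∑ o : Option Bool, envf f y o = 1 := by
  have hx := memB_getD y
  set x0 : V → Bool := fun v => (y v).getD false
  have hb : ∀ b, BddBelow ((fun x => f x b) '' {x : V → Bool | ∀ v, memB (x v) (y v)}) :=
    fun b => ⟨0, by rintro _ ⟨x, -, rfl⟩; exact hpos x b⟩
  rw [Fintype.sum_option, Fintype.sum_bool]
  show envf f y none + (envf f y (some true) + envf f y (some false)) = 1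
  simp only [envf]
  ring

include hpos hsum in
lemma envf_none_nonneg (y : V → Option Bool) : 0 ≤ envf f y none := by
  have hx := memB_getD y
  have h0 : sInf ((fun x => f x false) '' {x : V → Bool | ∀ v, memB (x v) (y v)})
      ≤ f (fun v => (y v).getD false) false :=
    csInf_le ⟨0, by rintro _ ⟨x, -, rfl⟩; exact hpos x false⟩ (Set.mem_image_of_mem _ hx)
  have h1 : sInf ((fun x => f x true) '' {x : V → Bool | ∀ v, memB (x v) (y v)})
      ≤ f (fun v => (y v).getD false) true :=
    csInf_le ⟨0, by rintro _ ⟨x, -, rfl⟩; exact hpos x true⟩ (Set.mem_image_of_mem _ hx)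
  have := hsum (fun v => (y v).getD false)
  show (0 : ℝ) ≤ 1 - _ - _
  linarith

include hpos hsum in
lemma envf_nonneg (y : V → Option Bool) (o : Option Bool) : 0 ≤ envf f y o := by
  cases o with
  | none => exact envf_none_nonneg f hpos hsum y
  | some b => exact envf_some_nonneg f hpos y b

end EnvFacts

section EnvTFacts
variable {E : Type*} [Fintype E] [DecidableEq E] [AddCommSemigroup E]
  (V : Finset E) (f : (V → Bool) → Bool → ℝ)
  (hpos : ∀ x b, 0 ≤ f x b) (hsum : ∀ x, f x false + f x true = 1)

include hpos hsum in
lemma envT_nonneg (c d : E → Option Bool) : 0 ≤ envT V f c d :=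
  Finset.prod_nonneg fun k _ => envf_nonneg f hpos hsum _ (d k)

include hpos hsum in
lemma envT_row (c : E → Option Bool) : ∑ d, envT V f c d = 1 := by
  show ∑ d : E → Option Bool, ∏ k : E, envf f (fun v : V => c (k + v.1)) (d k) = 1
  rw [← Fintype.piFinset_univ, ← Finset.prod_univ_sum]
  exact Finset.prod_eq_one fun k _ => envf_sum f hpos hsum _

include hpos in
lemma envT_bound (c : E → Option Bool) (b : Bool) :
    (sInf (Set.range fun x => f x b)) ^ (Fintype.card E) ≤ envT V f c (fun _ => some b) := by
  have hm : 0 ≤ sInf (Set.range fun x => f x b) :=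
    Real.sInf_nonneg (by rintro _ ⟨x, rfl⟩; exact hpos x b)
  calc (sInf (Set.range fun x => f x b)) ^ (Fintype.card E)
      = ∏ _k : E, sInf (Set.range fun x => f x b) := by
        rw [Finset.prod_const, Finset.card_univ]
    _ ≤ ∏ k : E, envf f (fun v : V => c (k + v.1)) (some b) :=
        Finset.prod_le_prod (fun _ _ => hm) (fun k _ => envf_some_ge f hpos _ b)
    _ = envT V f c (fun _ => some b) := rfl

end EnvTFacts

/-- If `min_x f(x)(0) + min_x f(x)(1) > 0` then the envelope PCA on a finite
set of cells is ergodic (unique attractive invariant measure); moreover, with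
`p = max(min_x f(x)(0), min_x f(x)(1))`, from any configuration the envelope
PCA reaches one of the monochromatic configurations `0^E`, `1^E` in one step
with probability at least `p^|E|`. -/

theorem stmt8 {E : Type*} [Fintype E] [DecidableEq E] [AddCommSemigroup E]
    (V : Finset E) (f : (V → Bool) → Bool → ℝ)
    (hpos : ∀ x b, 0 ≤ f x b) (hsum : ∀ x, f x false + f x true = 1)
    (hmin : 0 < sInf (Set.range fun x => f x false) + sInf (Set.range fun x => f x true)) :
    (∃ π : (E → Option Bool) → ℝ,
      (∀ c, 0 ≤ π c) ∧ (∑ c, π c = 1) ∧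
      (∀ d, ∑ c, π c * envT V f c d = π d) ∧
      (∀ ρ : (E → Option Bool) → ℝ, (∀ c, 0 ≤ ρ c) → (∑ c, ρ c = 1) →
        (∀ d, ∑ c, ρ c * envT V f c d = ρ d) → ρ = π) ∧
      (∀ μ : (E → Option Bool) → ℝ, (∀ c, 0 ≤ μ c) → (∑ c, μ c = 1) →
        ∀ d, Tendsto (fun n => ∑ c, μ c * (envT V f ^ n) c d) atTop (𝓝 (π d)))) ∧
    (∀ c : E → Option Bool,
      (max (sInf (Set.range fun x => f x false)) (sInf (Set.range fun x => f x true)))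
          ^ (Fintype.card E)
        ≤ max (envT V f c (fun _ => some false)) (envT V f c (fun _ => some true))) := by
  
  set m0 := sInf (Set.range fun x => f x false) with hm0def
  set m1 := sInf (Set.range fun x => f x true) with hm1def
  have hm0 : 0 ≤ m0 := Real.sInf_nonneg (by rintro _ ⟨x, rfl⟩; exact hpos x false)
  have hm1 : 0 ≤ m1 := Real.sInf_nonneg (by rintro _ ⟨x, rfl⟩; exact hpos x true)
  have hT0 := envT_nonneg V f hpos hsum
  have hT1 := envT_row V f hpos hsum
  have hbF := fun c => envT_bound V f hpos c false
  have hbT := fun c => envT_bound V f hpos c true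
  constructor
  · rcases le_total m0 m1 with h | h
    · have hm1pos : 0 < m1 := by linarith
      exact doeblin (envT V f) hT0 hT1 (fun _ => some true) (m1 ^ Fintype.card E)
        (by positivity) (fun c => hbT c)
    · have hm0pos : 0 < m0 := by linarith
      exact doeblin (envT V f) hT0 hT1 (fun _ => some false) (m0 ^ Fintype.card E)
        (by positivity) (fun c => hbF c)
  · intro c
    rcases le_total m0 m1 with h | h
    · rw [max_eq_right h]
      exact le_trans (hbT c) (le_max_right _ _)
    · rw [max_eq_left h]
      exact le_trans (hbF c) (le_max_left _ _)
end

section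
/- Consider the update function φ of a binary PCA P defined coordinatewise by thresholding uniform random variables (φ(x,r)_k = 0 if r_k < f((x_{k+v})_v)(0), else 1), and the update function φ̃ of the envelope PCA defined by φ̃(y,r)_k = 𝟎 if r_k < env(f)((y_{k+v})_v)(𝟎), φ̃(y,r)_k = 𝟏 if r_k ≥ 1 − env(f)((y_{k+v})_v)(𝟏), and ? otherwise. Then for all r ∈ [0,1]^E, all x ∈ A^E and all y ∈ B^E, if x ∈ y (coordinatewise membership) then φ(x,r) ∈ φ̃(y,r). -/
lemma envf_le {V : Type*} (f : (V → Bool) → Bool → ℝ) (hpos : ∀ x b, 0 ≤ f x b)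
    (y : V → Option Bool) (x : V → Bool) (hx : ∀ v, memB (x v) (y v)) (b : Bool) :
    envf f y (some b) ≤ f x b := by
  have hbdd : BddBelow ((fun x => f x b) '' {x : V → Bool | ∀ v, memB (x v) (y v)}) :=
    ⟨0, fun z hz => by obtain ⟨w, _, rfl⟩ := hz; exact hpos w b⟩
  have hmem : f x b ∈ (fun x => f x b) '' {x : V → Bool | ∀ v, memB (x v) (y v)} :=
    ⟨x, hx, rfl⟩
  cases b <;> exact csInf_le hbdd hmem

/-- Sandwich property of the update functions: if `φ` is the threshold update
function of the PCA and `ψ` the update function of the envelope PCA, then for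
all samples `r`, configurations `x ∈ A^E` and envelope configurations
`y ∈ B^E`, coordinatewise membership `x ∈ y` implies `φ(x,r) ∈ ψ(y,r)`. -/
theorem stmt10 {E : Type*} [AddCommSemigroup E] (V : Finset E)
    (f : (V → Bool) → Bool → ℝ)
    (hpos : ∀ x b, 0 ≤ f x b) (hsum : ∀ x, f x false + f x true = 1)
    (φ : (E → Bool) → (E → ℝ) → E → Bool)
    (hφ : ∀ x r k, φ x r k =
      if r k < f (fun v : V => x (k + v.1)) false then false else true)
    (ψ : (E → Option Bool) → (E → ℝ) → E → Option Bool)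
    (hψ : ∀ y r k, ψ y r k =
      if r k < envf f (fun v : V => y (k + v.1)) (some false) then some false
      else if 1 - envf f (fun v : V => y (k + v.1)) (some true) ≤ r k then some true
      else none) :
    ∀ (r : E → ℝ) (x : E → Bool) (y : E → Option Bool),
      (∀ k, memB (x k) (y k)) → ∀ k, memB (φ x r k) (ψ y r k) := by
  intro r x y hxy k
  rw [hφ, hψ]
  set xk : V → Bool := fun v : V => x (k + v.1) with hxk
  set yk : V → Option Bool := fun v : V => y (k + v.1) with hyk
  have hmem : ∀ v, memB (xk v) (yk v) := fun v => hxy (k + v.1)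
  by_cases h0 : r k < envf f yk (some false)
  · have : r k < f xk false := lt_of_lt_of_le h0 (envf_le f hpos yk xk hmem false)
    simp [h0, this]; right; rfl
  · simp only [h0, if_false]
    by_cases h1 : 1 - envf f yk (some true) ≤ r k
    · have h2 : envf f yk (some true) ≤ f xk true := envf_le f hpos yk xk hmem true
      have h3 : f xk false ≤ r k := by
        have := hsum xk; linarith
      have h4 : ¬ r k < f xk false := not_lt.mpr h3
      simp [h1, h4, memB]
    · simp [h1, memB]
end

section
/- Consider the Markov chain on {0,1}^{Z_n} induced by the PCA Majority(α) with n even and 0 < α < 1. The two alternating configurations (01)^{n/2} and (10)^{n/2} form a terminal communicating class of period two that is reachable from every configuration, and the unique invariant measure of the chain is (δ_{(01)^{n/2}} + δ_{(10)^{n/2}})/2. -/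
/-- The majority of three bits. -/
def maj (x y z : Bool) : Bool := (x && y) || (y && z) || (x && z)

/-- The transition matrix of the PCA Majority(α) on the set of cells `ℤ/nℤ`. -/
noncomputable def majT (n : ℕ) [NeZero n] (α : ℝ) :
    Matrix (ZMod n → Bool) (ZMod n → Bool) ℝ :=
  Matrix.of fun c d => ∏ k : ZMod n,
    (α * (if d k = maj (c (k - 1)) (c k) (c (k + 1)) then 1 else 0)
      + (1 - α) * (if d k = ! c k then 1 else 0))

/-- The alternating configuration `(01)^{n/2}` on `ℤ/nℤ`. -/
def alt01 (n : ℕ) : ZMod n → Bool := fun k => decide (k.val % 2 = 1)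

/-- The alternating configuration `(10)^{n/2}` on `ℤ/nℤ`. -/
def alt10 (n : ℕ) : ZMod n → Bool := fun k => decide (k.val % 2 = 0)
set_option linter.unusedSectionVars false
section aux
variable {n : ℕ} [NeZero n] {α : ℝ}

lemma maj_xyx (x y : Bool) : maj x y x = x := by cases x <;> cases y <;> rfl

lemma alt10_eq_not_alt01 : alt10 n = fun k => ! alt01 n k := by
  funext k
  simp only [alt01, alt10]
  rcases Nat.mod_two_eq_zero_or_one k.val with h | h <;> simp [h]

lemma alt01_eq_not_alt10 : alt01 n = fun k => ! alt10 n k := by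
  rw [alt10_eq_not_alt01]; funext k; simp

lemma two_le (heven : Even n) : 2 ≤ n := by
  obtain ⟨m, hm⟩ := heven
  have := NeZero.ne n
  omega

lemma alt01_succ (heven : Even n) (k : ZMod n) :
    alt01 n (k + 1) = ! alt01 n k := by
  have hn := two_le heven
  have h2 : 2 ∣ n := heven.two_dvd
  have hval : (k + 1).val % 2 = (k.val + 1) % 2 := by
    rw [ZMod.val_add, ZMod.val_one'' (by omega),
      Nat.mod_mod_of_dvd _ h2]
  simp only [alt01, hval]
  rcases Nat.mod_two_eq_zero_or_one k.val with h | h <;> simp [h] <;> omega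

lemma alt01_pred (heven : Even n) (k : ZMod n) :
    alt01 n (k - 1) = ! alt01 n k := by
  have := alt01_succ heven (k - 1)
  simp only [sub_add_cancel] at this
  rw [this, Bool.not_not]

end aux
section aux2
variable {n : ℕ} [NeZero n] {α : ℝ}

/-- From an alternating configuration, the step is deterministic: complement. -/
lemma majT_alt (hα : 0 < α) (hα1 : α < 1) {c : ZMod n → Bool}
    (hc : ∀ k, c (k + 1) = ! c k) (hc' : ∀ k, c (k - 1) = ! c k)
    (d : ZMod n → Bool) :
    majT n α c d = if d = (fun k => ! c k) then 1 else 0 := by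
  have hfac : ∀ k : ZMod n,
      (α * (if d k = maj (c (k - 1)) (c k) (c (k + 1)) then 1 else 0)
        + (1 - α) * (if d k = ! c k then 1 else 0))
      = if d k = ! c k then 1 else 0 := by
    intro k
    rw [hc, hc', maj_xyx]
    split <;> ring
  unfold majT
  simp only [Matrix.of_apply]
  rw [Finset.prod_congr rfl (fun k _ => hfac k)]
  by_cases h : d = fun k => ! c k
  · simp [h]
  · obtain ⟨k, hk⟩ : ∃ k, d k ≠ ! c k := by
      by_contra hcon
      push_neg at hcon
      exact h (funext hcon)
    rw [if_neg h]
    apply Finset.prod_eq_zero (Finset.mem_univ k)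
    simp [hk]

lemma majT_nonneg (hα : 0 < α) (hα1 : α < 1) (c d : ZMod n → Bool) :
    0 ≤ majT n α c d := by
  unfold majT
  simp only [Matrix.of_apply]
  apply Finset.prod_nonneg
  intro k _
  have i1 : (0:ℝ) ≤ (if d k = maj (c (k - 1)) (c k) (c (k + 1)) then 1 else 0) := by
    split <;> norm_num
  have i2 : (0:ℝ) ≤ (if d k = ! c k then 1 else 0) := by split <;> norm_num
  nlinarith

lemma majT_rowsum (c : ZMod n → Bool) : ∑ d, majT n α c d = 1 := by
  unfold majT
  simp only [Matrix.of_apply]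
  rw [← Fintype.piFinset_univ, ← Finset.prod_univ_sum
    (t := fun _ : ZMod n => (Finset.univ : Finset Bool))
    (f := fun k b => (α * if b = maj (c (k - 1)) (c k) (c (k + 1)) then 1 else 0)
      + (1 - α) * (if b = ! c k then 1 else 0))]
  apply Finset.prod_eq_one
  intro k _
  rw [Fintype.sum_bool]
  by_cases h : maj (c (k - 1)) (c k) (c (k + 1)) = ! c k
  · rw [h]
    cases hck : c k <;> simp [hck] <;> ring
  · have h1 : maj (c (k - 1)) (c k) (c (k + 1)) = c k := by
      cases hmaj : maj (c (k - 1)) (c k) (c (k + 1)) <;>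
        cases hck : c k <;> simp_all
    rw [h1]
    cases hck : c k <;> simp [hck] <;> ring

/-- One-step positivity. -/
lemma majT_pos (hα : 0 < α) (hα1 : α < 1) {c d : ZMod n → Bool}
    (h : ∀ k, d k = maj (c (k - 1)) (c k) (c (k + 1)) ∨ d k = ! c k) :
    0 < majT n α c d := by
  unfold majT
  simp only [Matrix.of_apply]
  apply Finset.prod_pos
  intro k _
  rcases h k with h1 | h1
  · have i2 : (0:ℝ) ≤ (if d k = ! c k then 1 else 0) := by split <;> norm_num
    have : (0:ℝ) ≤ (1 - α) * (if d k = ! c k then 1 else 0) := by nlinarith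
    calc (0:ℝ) < α * 1 := by linarith
    _ = α * (if d k = maj (c (k - 1)) (c k) (c (k + 1)) then 1 else 0) := by
        rw [if_pos h1]
    _ ≤ _ := by linarith
  · have i1 : (0:ℝ) ≤ (if d k = maj (c (k - 1)) (c k) (c (k + 1)) then 1 else 0) := by
      split <;> norm_num
    have : (0:ℝ) ≤ α * (if d k = maj (c (k - 1)) (c k) (c (k + 1)) then 1 else 0) := by
      nlinarith
    calc (0:ℝ) < (1 - α) * 1 := by linarith
    _ = (1 - α) * (if d k = ! c k then 1 else 0) := by rw [if_pos h1]
    _ ≤ _ := by linarith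

lemma majT_pow_nonneg (hα : 0 < α) (hα1 : α < 1) (m : ℕ) (c d : ZMod n → Bool) :
    0 ≤ (majT n α ^ m) c d := by
  induction m generalizing c d with
  | zero =>
    simp only [pow_zero, Matrix.one_apply]
    split <;> norm_num
  | succ m ih =>
    rw [pow_succ, Matrix.mul_apply]
    exact Finset.sum_nonneg fun e _ => mul_nonneg (ih c e) (majT_nonneg hα hα1 e d)

lemma majT_pow_rowsum (m : ℕ) (c : ZMod n → Bool) :
    ∑ d, (majT n α ^ m) c d = 1 := by
  induction m generalizing c with
  | zero => simp [Matrix.one_apply]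
  | succ m ih =>
    simp only [pow_succ, Matrix.mul_apply]
    rw [Finset.sum_comm]
    calc ∑ e, ∑ d, (majT n α ^ m) c e * majT n α e d
        = ∑ e, (majT n α ^ m) c e * ∑ d, majT n α e d := by
          simp [Finset.mul_sum]
      _ = 1 := by simp [majT_rowsum, ih]

/-- Chapman–Kolmogorov lower bound. -/
lemma majT_pow_le (hα : 0 < α) (hα1 : α < 1) (a b : ℕ) (c d e : ZMod n → Bool) :
    (majT n α ^ a) c d * (majT n α ^ b) d e ≤ (majT n α ^ (a + b)) c e := by
  rw [pow_add, Matrix.mul_apply]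
  exact Finset.single_le_sum
    (f := fun x => (majT n α ^ a) c x * (majT n α ^ b) x e)
    (fun x _ => mul_nonneg (majT_pow_nonneg hα hα1 a c x) (majT_pow_nonneg hα hα1 b x e))
    (Finset.mem_univ d)

end aux2
section aux3
variable {n : ℕ} [NeZero n] {α : ℝ}

lemma bool_resolve {a b : Bool} (h : ¬ a = b) : b = ! a := by
  cases a <;> cases b <;> simp_all

lemma alt10_apply (k : ZMod n) : alt10 n k = ! alt01 n k := by
  simp only [alt01, alt10]
  rcases Nat.mod_two_eq_zero_or_one k.val with h | h <;> simp [h]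

lemma alt10_succ (heven : Even n) (k : ZMod n) :
    alt10 n (k + 1) = ! alt10 n k := by
  rw [alt10_apply, alt10_apply, alt01_succ heven, Bool.not_not]

lemma alt10_pred (heven : Even n) (k : ZMod n) :
    alt10 n (k - 1) = ! alt10 n k := by
  rw [alt10_apply, alt10_apply, alt01_pred heven, Bool.not_not]

lemma majT_alt01 (heven : Even n) (hα : 0 < α) (hα1 : α < 1) (d : ZMod n → Bool) :
    majT n α (alt01 n) d = if d = alt10 n then 1 else 0 := by
  rw [majT_alt hα hα1 (alt01_succ heven) (alt01_pred heven) d, ← alt10_eq_not_alt01]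

lemma majT_alt10 (heven : Even n) (hα : 0 < α) (hα1 : α < 1) (d : ZMod n → Bool) :
    majT n α (alt10 n) d = if d = alt01 n then 1 else 0 := by
  rw [majT_alt hα hα1 (alt10_succ heven) (alt10_pred heven) d, ← alt01_eq_not_alt10]

lemma alt01_ne_alt10 : alt01 n ≠ alt10 n := by
  intro h
  have := congrFun h 0
  simp [alt01, alt10, ZMod.val_zero] at this

lemma maj_bbz (b z : Bool) : maj b b z = b := by cases b <;> cases z <;> rfl
lemma maj_zbb (b z : Bool) : maj z b b = b := by cases b <;> cases z <;> rfl
lemma maj_bbb (b : Bool) : maj b b b = b := by cases b <;> rfl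

open scoped Classical in
/-- The configuration after `j` growth steps: a block of `b`'s of length `j+2`
starting at `k0`, with everything else flipped `j` times. -/
noncomputable def blk (c : ZMod n → Bool) (b : Bool) (k0 : ZMod n) (j : ℕ) :
    ZMod n → Bool :=
  fun i => if ∃ t : ℕ, t < j + 2 ∧ i = k0 + (t : ZMod n) then b
    else xor (c i) (decide (j % 2 = 1))

lemma blk_mem {c : ZMod n → Bool} {b : Bool} {k0 : ZMod n} {j : ℕ} {i : ZMod n}
    (h : ∃ t : ℕ, t < j + 2 ∧ i = k0 + (t : ZMod n)) : blk c b k0 j i = b := by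
  rw [blk, if_pos h]

lemma blk_not_mem {c : ZMod n → Bool} {b : Bool} {k0 : ZMod n} {j : ℕ} {i : ZMod n}
    (h : ¬ ∃ t : ℕ, t < j + 2 ∧ i = k0 + (t : ZMod n)) :
    blk c b k0 j i = xor (c i) (decide (j % 2 = 1)) := by
  rw [blk, if_neg h]

lemma blk_zero {c : ZMod n → Bool} {b : Bool} {k0 : ZMod n}
    (h0 : c k0 = b) (h1 : c (k0 + 1) = b) : blk c b k0 0 = c := by
  funext i
  by_cases h : ∃ t : ℕ, t < 0 + 2 ∧ i = k0 + (t : ZMod n)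
  · rw [blk_mem h]
    obtain ⟨t, ht, rfl⟩ := h
    interval_cases t
    · simpa using h0.symm
    · simpa using h1.symm
  · rw [blk_not_mem h]
    simp

lemma blk_step {c : ZMod n → Bool} {b : Bool} {k0 : ZMod n} (j : ℕ) (i : ZMod n) :
    blk c b k0 (j + 1) i
      = maj (blk c b k0 j (i - 1)) (blk c b k0 j i) (blk c b k0 j (i + 1)) ∨
    blk c b k0 (j + 1) i = ! blk c b k0 j i := by
  by_cases hi : ∃ t : ℕ, t < (j + 1) + 2 ∧ i = k0 + (t : ZMod n)
  · rw [blk_mem hi]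
    by_cases hi' : ∃ t : ℕ, t < j + 2 ∧ i = k0 + (t : ZMod n)
    · left
      rw [blk_mem hi']
      obtain ⟨t, ht, rfl⟩ := hi'
      rcases Nat.eq_zero_or_pos t with rfl | htpos
      · -- use right neighbour
        have hr : blk c b k0 j (k0 + ((0:ℕ) : ZMod n) + 1) = b :=
          blk_mem ⟨1, by omega, by push_cast; ring⟩
        rw [hr, maj_zbb]
      · -- use left neighbour
        have hl : blk c b k0 j (k0 + (t : ZMod n) - 1) = b :=
          blk_mem ⟨t - 1, by omega, by
            have : ((t - 1 : ℕ) : ZMod n) = (t : ZMod n) - 1 := by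
              push_cast [Nat.cast_sub htpos]; ring
            rw [this]; ring⟩
        rw [hl, maj_bbz]
    · -- the freshly added cell
      have hl : blk c b k0 j (i - 1) = b := by
        apply blk_mem
        obtain ⟨t, ht, rfl⟩ := hi
        have ht' : t = j + 2 := by
          by_contra hne
          exact hi' ⟨t, by omega, rfl⟩
        refine ⟨j + 1, by omega, ?_⟩
        subst ht'
        have : ((j + 2 : ℕ) : ZMod n) = ((j + 1 : ℕ) : ZMod n) + 1 := by push_cast; ring
        rw [this]; ring
      by_cases hv : blk c b k0 j i = b
      · left
        rw [hl, hv, maj_bbz]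
      · right
        exact bool_resolve hv
  · right
    have hi' : ¬ ∃ t : ℕ, t < j + 2 ∧ i = k0 + (t : ZMod n) := by
      intro ⟨t, ht, h⟩
      exact hi ⟨t, by omega, h⟩
    rw [blk_not_mem hi, blk_not_mem hi']
    rcases Nat.mod_two_eq_zero_or_one j with h | h
    · have h' : (j + 1) % 2 = 1 := by omega
      simp [h, h']
    · have h' : (j + 1) % 2 = 0 := by omega
      simp [h, h']

lemma reach_block (hα : 0 < α) (hα1 : α < 1) {c : ZMod n → Bool} {b : Bool}
    {k0 : ZMod n} (h0 : c k0 = b) (h1 : c (k0 + 1) = b) (j : ℕ) :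
    0 < (majT n α ^ j) c (blk c b k0 j) := by
  induction j with
  | zero =>
    rw [blk_zero h0 h1]
    simp [Matrix.one_apply_eq]
  | succ j ih =>
    have hstep : 0 < majT n α (blk c b k0 j) (blk c b k0 (j + 1)) :=
      majT_pos hα hα1 (blk_step j)
    calc (0:ℝ) < (majT n α ^ j) c (blk c b k0 j) * majT n α (blk c b k0 j) (blk c b k0 (j+1)) :=
          mul_pos ih hstep
      _ ≤ (majT n α ^ (j + 1)) c (blk c b k0 (j + 1)) := by
          have := majT_pow_le hα hα1 j 1 c (blk c b k0 j) (blk c b k0 (j + 1))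
          rwa [pow_one] at this

lemma blk_n (c : ZMod n → Bool) (b : Bool) (k0 : ZMod n) :
    blk c b k0 n = fun _ => b := by
  funext i
  apply blk_mem
  refine ⟨(i - k0).val, lt_of_lt_of_le (ZMod.val_lt _) (by omega), ?_⟩
  rw [ZMod.natCast_val, ZMod.cast_id]
  ring

lemma const_to_alt01 (hα : 0 < α) (hα1 : α < 1) (b : Bool) :
    0 < majT n α (fun _ => b) (alt01 n) := by
  apply majT_pos hα hα1
  intro k
  by_cases h : alt01 n k = b
  · left; rw [h, maj_bbb]
  · right
    cases hb : alt01 n k <;> cases b <;> simp_all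

lemma reach (heven : Even n) (hα : 0 < α) (hα1 : α < 1) (c : ZMod n → Bool) :
    ∃ m : ℕ, 0 < (majT n α ^ m) c (alt01 n) := by
  by_cases hc : ∃ k, c (k + 1) = c k
  · obtain ⟨k0, hk0⟩ := hc
    refine ⟨n + 1, ?_⟩
    calc (0:ℝ) < (majT n α ^ n) c (blk c (c k0) k0 n) * majT n α (blk c (c k0) k0 n) (alt01 n) := by
          apply mul_pos (reach_block hα hα1 rfl hk0 n)
          rw [blk_n]
          exact const_to_alt01 hα hα1 _
      _ ≤ (majT n α ^ (n + 1)) c (alt01 n) := by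
          have := majT_pow_le hα hα1 n 1 c (blk c (c k0) k0 n) (alt01 n)
          rwa [pow_one] at this
  · push_neg at hc
    have hflip : ∀ k, c (k + 1) = ! c k := by
      intro k
      exact (bool_resolve (fun h => hc k h.symm)).symm ▸ rfl
    have key : ∀ m : ℕ, c ((m : ZMod n)) = xor (decide (m % 2 = 1)) (c 0) := by
      intro m
      induction m with
      | zero => simp
      | succ m ih =>
        have : ((m + 1 : ℕ) : ZMod n) = (m : ZMod n) + 1 := by push_cast; ring
        rw [this, hflip, ih]
        rcases Nat.mod_two_eq_zero_or_one m with h | h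
        · have h' : (m + 1) % 2 = 1 := by omega
          simp [h, h']
        · have h' : (m + 1) % 2 = 0 := by omega
          simp [h, h']
    have hck : ∀ k : ZMod n, c k = xor (decide (k.val % 2 = 1)) (c 0) := by
      intro k
      have := key k.val
      rwa [ZMod.natCast_val, ZMod.cast_id] at this
    rcases Bool.eq_false_or_eq_true (c 0) with h0 | h0
    · -- c = alt10
      have : c = alt10 n := by
        funext k
        have hk := hck k
        rw [h0] at hk
        rw [hk]
        simp only [alt10]
        rcases Nat.mod_two_eq_zero_or_one k.val with h | h <;> simp [h]
      refine ⟨1, ?_⟩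
      rw [pow_one, this, majT_alt10 heven hα hα1, if_pos rfl]
      norm_num
    · -- c = alt01
      have : c = alt01 n := by
        funext k
        have hk := hck k
        rw [h0] at hk
        rw [hk]
        simp only [alt01]
        rcases Nat.mod_two_eq_zero_or_one k.val with h | h <;> simp [h]
      refine ⟨0, ?_⟩
      rw [pow_zero, this, Matrix.one_apply_eq]
      norm_num

end aux3
section aux4
variable {n : ℕ} [NeZero n] {α : ℝ}

/-- The mass on the two alternating configurations after `m` steps from `c`. -/
noncomputable def sm (n : ℕ) [NeZero n] (α : ℝ) (m : ℕ) (c : ZMod n → Bool) : ℝ :=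
  (majT n α ^ m) c (alt01 n) + (majT n α ^ m) c (alt10 n)

lemma sm_nonneg (hα : 0 < α) (hα1 : α < 1) (m : ℕ) (c : ZMod n → Bool) :
    0 ≤ sm n α m c :=
  add_nonneg (majT_pow_nonneg hα hα1 m c _) (majT_pow_nonneg hα hα1 m c _)

lemma sm_le_one (hα : 0 < α) (hα1 : α < 1) (m : ℕ) (c : ZMod n → Bool) :
    sm n α m c ≤ 1 := by
  have hpair : sm n α m c = ∑ d ∈ ({alt01 n, alt10 n} : Finset (ZMod n → Bool)),
      (majT n α ^ m) c d := by
    rw [Finset.sum_pair alt01_ne_alt10, sm]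
  rw [hpair, ← majT_pow_rowsum (α := α) m c]
  apply Finset.sum_le_sum_of_subset_of_nonneg (Finset.subset_univ _)
  intro d _ _
  exact majT_pow_nonneg hα hα1 m c d

lemma sm_succ_ge (heven : Even n) (hα : 0 < α) (hα1 : α < 1) (m : ℕ)
    (c : ZMod n → Bool) : sm n α m c ≤ sm n α (m + 1) c := by
  have h01 : (majT n α ^ m) c (alt10 n) ≤ (majT n α ^ (m + 1)) c (alt01 n) := by
    have := majT_pow_le hα hα1 m 1 c (alt10 n) (alt01 n)
    rwa [pow_one, majT_alt10 heven hα hα1, if_pos rfl, mul_one] at this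
  have h10 : (majT n α ^ m) c (alt01 n) ≤ (majT n α ^ (m + 1)) c (alt10 n) := by
    have := majT_pow_le hα hα1 m 1 c (alt01 n) (alt10 n)
    rwa [pow_one, majT_alt01 heven hα hα1, if_pos rfl, mul_one] at this
  rw [sm, sm]
  linarith

lemma sm_mono (heven : Even n) (hα : 0 < α) (hα1 : α < 1) {m m' : ℕ} (h : m ≤ m')
    (c : ZMod n → Bool) : sm n α m c ≤ sm n α m' c := by
  induction m', h using Nat.le_induction with
  | base => exact le_refl _
  | succ m' hm ih => exact le_trans ih (sm_succ_ge heven hα hα1 m' c)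

lemma step_a01 (heven : Even n) (hα : 0 < α) (hα1 : α < 1) (m : ℕ)
    (d : ZMod n → Bool) :
    (majT n α ^ (m + 1)) (alt01 n) d = (majT n α ^ m) (alt10 n) d := by
  rw [pow_succ', Matrix.mul_apply]
  rw [Finset.sum_eq_single (alt10 n)]
  · rw [majT_alt01 heven hα hα1, if_pos rfl, one_mul]
  · intro e _ he
    rw [majT_alt01 heven hα hα1, if_neg he, zero_mul]
  · intro h
    exact absurd (Finset.mem_univ _) h

lemma step_a10 (heven : Even n) (hα : 0 < α) (hα1 : α < 1) (m : ℕ)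
    (d : ZMod n → Bool) :
    (majT n α ^ (m + 1)) (alt10 n) d = (majT n α ^ m) (alt01 n) d := by
  rw [pow_succ', Matrix.mul_apply]
  rw [Finset.sum_eq_single (alt01 n)]
  · rw [majT_alt10 heven hα hα1, if_pos rfl, one_mul]
  · intro e _ he
    rw [majT_alt10 heven hα hα1, if_neg he, zero_mul]
  · intro h
    exact absurd (Finset.mem_univ _) h

lemma sm_alt (heven : Even n) (hα : 0 < α) (hα1 : α < 1) (m : ℕ) :
    sm n α m (alt01 n) = 1 ∧ sm n α m (alt10 n) = 1 := by
  induction m with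
  | zero =>
    constructor
    · rw [sm, pow_zero, Matrix.one_apply_eq, Matrix.one_apply_ne alt01_ne_alt10]
      norm_num
    · rw [sm, pow_zero, Matrix.one_apply_eq,
        Matrix.one_apply_ne (Ne.symm alt01_ne_alt10)]
      norm_num
  | succ m ih =>
    constructor
    · rw [sm, step_a01 heven hα hα1, step_a01 heven hα hα1, ← sm]
      exact ih.2
    · rw [sm, step_a10 heven hα hα1, step_a10 heven hα hα1, ← sm]
      exact ih.1

lemma sm_split (m m' : ℕ) (c : ZMod n → Bool) :
    sm n α (m + m') c = ∑ e, (majT n α ^ m) c e * sm n α m' e := by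
  simp only [sm, pow_add, Matrix.mul_apply]
  rw [← Finset.sum_add_distrib]
  apply Finset.sum_congr rfl
  intro e _
  ring

lemma unique_inv (heven : Even n) (hα0 : 0 < α) (hα1 : α < 1)
    (ρ : (ZMod n → Bool) → ℝ) (hnn : ∀ c, 0 ≤ ρ c) (hsum : ∑ c, ρ c = 1)
    (hinv : ∀ d, ∑ c, ρ c * majT n α c d = ρ d) :
    ρ = fun c => if c = alt01 n ∨ c = alt10 n then (1:ℝ)/2 else 0 := by
  -- iterated invariance
  have hrho_pow : ∀ m d, ∑ c, ρ c * (majT n α ^ m) c d = ρ d := by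
    intro m
    induction m with
    | zero =>
      intro d
      simp only [pow_zero, Matrix.one_apply, mul_ite, mul_one, mul_zero]
      rw [Finset.sum_ite_eq' Finset.univ d ρ]
      simp
    | succ m ih =>
      intro d
      rw [pow_succ]
      simp only [Matrix.mul_apply, Finset.mul_sum]
      rw [Finset.sum_comm]
      have hswap : ∀ e, ∑ c, ρ c * ((majT n α ^ m) c e * majT n α e d)
          = (∑ c, ρ c * (majT n α ^ m) c e) * majT n α e d := by
        intro e
        rw [Finset.sum_mul]
        apply Finset.sum_congr rfl
        intro c _
        ring
      rw [Finset.sum_congr rfl fun e _ => hswap e]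
      simp only [ih]
      exact hinv d
  choose F hF using reach heven hα0 hα1
  set M := Finset.univ.sup F with hM
  have hsmM : ∀ c, 0 < sm n α M c := by
    intro c
    calc (0:ℝ) < (majT n α ^ (F c)) c (alt01 n) := hF c
      _ ≤ sm n α (F c) c := by
          rw [sm]
          have := majT_pow_nonneg hα0 hα1 (F c) c (alt10 n)
          linarith
      _ ≤ sm n α M c := sm_mono heven hα0 hα1 (Finset.le_sup (Finset.mem_univ c)) c
  set ε := Finset.univ.inf' Finset.univ_nonempty (sm n α M) with hε
  have hε0 : 0 < ε := by
    rw [hε, Finset.lt_inf'_iff]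
    intro c _
    exact hsmM c
  have hεle : ∀ c, ε ≤ sm n α M c := by
    intro c
    exact Finset.inf'_le _ (Finset.mem_univ c)
  have hε1 : ε ≤ 1 := le_trans (hεle (alt01 n)) (sm_le_one hα0 hα1 M _)
  -- geometric decay of the mass outside the alternating pair
  have Q : ∀ j c, 1 - (1 - ε) ^ j ≤ sm n α (j * M) c := by
    intro j
    induction j with
    | zero =>
      intro c
      simpa using sm_nonneg hα0 hα1 0 c
    | succ j ih =>
      intro c
      have hm : (j + 1) * M = M + j * M := by ring
      rw [hm, sm_split]
      set q := 1 - (1 - ε) ^ j with hq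
      have hterm : ∀ e : ZMod n → Bool,
          (majT n α ^ M) c e * sm n α (j * M) e
          = (majT n α ^ M) c e * q + (majT n α ^ M) c e * (sm n α (j * M) e - q) := by
        intro e; ring
      rw [Finset.sum_congr rfl fun e _ => hterm e, Finset.sum_add_distrib,
        ← Finset.sum_mul, majT_pow_rowsum, one_mul]
      have h1q : (0:ℝ) ≤ (1 - ε) ^ j := pow_nonneg (by linarith) j
      have h2 : sm n α M c * (1 - q) ≤
          ∑ e, (majT n α ^ M) c e * (sm n α (j * M) e - q) := by
        have hpair : ∑ e ∈ ({alt01 n, alt10 n} : Finset (ZMod n → Bool)),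
            (majT n α ^ M) c e * (sm n α (j * M) e - q)
            = sm n α M c * (1 - q) := by
          rw [Finset.sum_pair alt01_ne_alt10, (sm_alt heven hα0 hα1 _).1,
            (sm_alt heven hα0 hα1 _).2, sm]
          ring
        rw [← hpair]
        apply Finset.sum_le_sum_of_subset_of_nonneg (Finset.subset_univ _)
        intro e _ _
        apply mul_nonneg (majT_pow_nonneg hα0 hα1 M c e)
        have := ih e
        linarith
      have h3 : ε * (1 - q) ≤ sm n α M c * (1 - q) := by
        apply mul_le_mul_of_nonneg_right (hεle c)
        rw [hq]
        ring_nf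
        linarith [h1q]
      have heq : 1 - (1 - ε) ^ (j + 1) = q + ε * (1 - q) := by
        rw [hq, pow_succ]
        ring
      linarith
  -- mass outside the two alternating configurations vanishes
  have hout : ∀ c0 : ZMod n → Bool, c0 ≠ alt01 n → c0 ≠ alt10 n → ρ c0 = 0 := by
    intro c0 hne1 hne2
    refine le_antisymm ?_ (hnn c0)
    by_contra hpos
    push_neg at hpos
    obtain ⟨j, hj⟩ := exists_pow_lt_of_lt_one hpos (show (1:ℝ) - ε < 1 by linarith)
    have hbound : ∀ c, (majT n α ^ (j * M)) c c0 ≤ (1 - ε) ^ j := by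
      intro c
      have htriple : sm n α (j * M) c + (majT n α ^ (j * M)) c c0 ≤ 1 := by
        have hmem : alt10 n ∉ ({c0} : Finset (ZMod n → Bool)) := by
          simp [Ne.symm hne2]
        have hmem2 : alt01 n ∉ ({alt10 n, c0} : Finset (ZMod n → Bool)) := by
          simp [alt01_ne_alt10, Ne.symm hne1]
        have hs : ∑ e ∈ ({alt01 n, alt10 n, c0} : Finset (ZMod n → Bool)),
            (majT n α ^ (j * M)) c e
            = sm n α (j * M) c + (majT n α ^ (j * M)) c c0 := by
          rw [Finset.sum_insert hmem2, Finset.sum_insert hmem,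
            Finset.sum_singleton, sm]
          ring
        rw [← hs, ← majT_pow_rowsum (α := α) (j * M) c]
        apply Finset.sum_le_sum_of_subset_of_nonneg (Finset.subset_univ _)
        intro e _ _
        exact majT_pow_nonneg hα0 hα1 _ c e
      have := Q j c
      linarith
    have hb : ρ c0 ≤ (1 - ε) ^ j := by
      rw [← hrho_pow (j * M) c0]
      calc ∑ c, ρ c * (majT n α ^ (j * M)) c c0
          ≤ ∑ c, ρ c * (1 - ε) ^ j := by
            apply Finset.sum_le_sum
            intro c _
            exact mul_le_mul_of_nonneg_left (hbound c) (hnn c)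
        _ = (1 - ε) ^ j := by rw [← Finset.sum_mul, hsum, one_mul]
    linarith
  -- on the pair, the masses are equal and sum to one
  have hz : ∀ c ∈ Finset.univ, c ∉ ({alt01 n, alt10 n} : Finset (ZMod n → Bool)) →
      ρ c = 0 := by
    intro c _ hc
    simp only [Finset.mem_insert, Finset.mem_singleton] at hc
    push_neg at hc
    exact hout c hc.1 hc.2
  have hpairsum : ρ (alt01 n) + ρ (alt10 n) = 1 := by
    have he : ∑ c ∈ ({alt01 n, alt10 n} : Finset (ZMod n → Bool)), ρ c = ∑ c, ρ c :=
      Finset.sum_subset (Finset.subset_univ _) hz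
    rw [← hsum, ← he, Finset.sum_pair alt01_ne_alt10]
  have hswap : ρ (alt01 n) = ρ (alt10 n) := by
    have hz2 : ∀ c ∈ Finset.univ, c ∉ ({alt01 n, alt10 n} : Finset (ZMod n → Bool)) →
        ρ c * majT n α c (alt01 n) = 0 := by
      intro c hc1 hc2
      rw [hz c hc1 hc2, zero_mul]
    have he : ∑ c ∈ ({alt01 n, alt10 n} : Finset (ZMod n → Bool)),
        ρ c * majT n α c (alt01 n) = ∑ c, ρ c * majT n α c (alt01 n) :=
      Finset.sum_subset (Finset.subset_univ _) hz2
    have this1 := hinv (alt01 n)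
    rw [← he, Finset.sum_pair alt01_ne_alt10 (f := fun c => ρ c * majT n α c (alt01 n)),
      majT_alt01 heven hα0 hα1, majT_alt10 heven hα0 hα1, if_neg alt01_ne_alt10,
      if_pos rfl, mul_zero, mul_one, zero_add] at this1
    exact this1.symm
  funext c
  by_cases h1 : c = alt01 n
  · rw [if_pos (Or.inl h1), h1]
    linarith
  · by_cases h2 : c = alt10 n
    · rw [if_pos (Or.inr h2), h2]
      linarith
    · rw [if_neg (by tauto)]
      exact hout c h1 h2

end aux4
/-- For `n` even and `0 < α < 1`, the two alternating configurations are
deterministically swapped by Majority(α) (a terminal class of period two),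
they are reachable from every configuration, and the unique invariant measure
of the chain is `(δ_{(01)^{n/2}} + δ_{(10)^{n/2}})/2`. -/
theorem stmt12 (n : ℕ) [NeZero n] (heven : Even n)
    (α : ℝ) (hα0 : 0 < α) (hα1 : α < 1) :
    majT n α (alt01 n) (alt10 n) = 1 ∧
    majT n α (alt10 n) (alt01 n) = 1 ∧
    (∀ c : ZMod n → Bool, ∃ m : ℕ, 0 < (majT n α ^ m) c (alt01 n)) ∧
    (∀ d : ZMod n → Bool,
      ∑ c, (if c = alt01 n ∨ c = alt10 n then (1:ℝ)/2 else 0) * majT n α c d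
        = if d = alt01 n ∨ d = alt10 n then (1:ℝ)/2 else 0) ∧
    (∀ ρ : (ZMod n → Bool) → ℝ, (∀ c, 0 ≤ ρ c) → (∑ c, ρ c = 1) →
      (∀ d, ∑ c, ρ c * majT n α c d = ρ d) →
      ρ = fun c => if c = alt01 n ∨ c = alt10 n then (1:ℝ)/2 else 0) := by
  refine ⟨?_, ?_, ?_, ?_, ?_⟩
  · rw [majT_alt01 heven hα0 hα1, if_pos rfl]
  · rw [majT_alt10 heven hα0 hα1, if_pos rfl]
  · exact reach heven hα0 hα1
  · intro d
    have hz : ∀ c ∈ Finset.univ, c ∉ ({alt01 n, alt10 n} : Finset (ZMod n → Bool)) →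
        (if c = alt01 n ∨ c = alt10 n then (1:ℝ)/2 else 0) * majT n α c d = 0 := by
      intro c _ hc
      simp only [Finset.mem_insert, Finset.mem_singleton] at hc
      push_neg at hc
      rw [if_neg (by tauto), zero_mul]
    rw [← Finset.sum_subset (Finset.subset_univ _) hz,
      Finset.sum_pair alt01_ne_alt10
        (f := fun c => (if c = alt01 n ∨ c = alt10 n then (1:ℝ)/2 else 0) * majT n α c d),
      if_pos (Or.inl rfl), if_pos (Or.inr rfl),
      majT_alt01 heven hα0 hα1, majT_alt10 heven hα0 hα1]
    by_cases h1 : d = alt01 n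
    · subst h1
      rw [if_neg alt01_ne_alt10, if_pos rfl, if_pos (Or.inl rfl)]
      ring
    · by_cases h2 : d = alt10 n
      · subst h2
        rw [if_pos rfl, if_neg (Ne.symm alt01_ne_alt10), if_pos (Or.inr rfl)]
        ring
      · rw [if_neg h2, if_neg h1, if_neg (by tauto)]
        ring
  · exact unique_inv heven hα0 hα1
end

section
/- The PCA Majority(α) on {0,1}^Z is conjugate to the PCA FINAE(α) via checkerboard bit-flips: Majority(α) = flip-odd ∘ FINAE(α) ∘ flip-even as maps on measures (equivalently, the local transition functions satisfy the corresponding identity). Consequently, if π is an invariant measure of FINAE(α), then (flip-odd(π) + flip-even(π))/2 is an invariant measure of Majority(α). -/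
open MeasureTheory
open scoped ENNReal

/-- The 'flip-if-not-all-equal' rule (elementary cellular automaton 178). -/
def finaeRule (x y z : Bool) : Bool := if x = y ∧ y = z then y else !y

/-- Flip the bits at odd positions. -/
def flipOdd (x : ℤ → Bool) : ℤ → Bool := fun i => if i % 2 = 1 then !x i else x i

/-- Flip the bits at even positions. -/
def flipEven (x : ℤ → Bool) : ℤ → Bool := fun i => if i % 2 = 0 then !x i else x i

/-!
Flipping the centre of a neighbourhood turns FINAE into Majority: `finaeRule a (!b) c = maj a b c`,
and flipping the two neighbours flips the result, `finaeRule (!a) b (!c) = !maj a b c`. At an even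
site `flipEven` flips the centre of the input; at an odd site it flips both neighbours while
`flipOdd` flips the output. In both cases FINAE's "keep" move becomes Majority's "flip" move, so
the transition weights agree site by site, and since both kernels are determined by their values on
cylinders, `κM x = flipOdd_* κF (flipEven x)`; by the same argument with the parities exchanged,
`κM x = flipEven_* κF (flipOdd x)`. Hence if `π` is FINAE-invariant, Majority maps
`flipOdd_* π` to `flipEven_* π` and back, and the average of the two is invariant.
-/

namespace MeasureTheory.Measure

variable {α β γ δ : Type*} [MeasurableSpace α] [MeasurableSpace β] [MeasurableSpace γ]
  [MeasurableSpace δ]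

theorem bind_map_eq_bind_comp (μ : Measure α) {f : α → β} (hf : Measurable f)
    {κ : β → Measure γ} (hκ : Measurable κ) : (μ.map f).bind κ = μ.bind (κ ∘ f) := by
  ext s hs
  rw [bind_apply hs hκ.aemeasurable, bind_apply hs (hκ.comp hf).aemeasurable,
    lintegral_map (f := fun b ↦ κ b s) ((measurable_coe hs).comp hκ) hf]
  rfl

theorem map_bind_eq_bind_map (μ : Measure α) {κ : α → Measure β} (hκ : Measurable κ)
    {g : β → γ} (hg : Measurable g) : (μ.bind κ).map g = μ.bind fun a ↦ (κ a).map g := by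
  ext s hs
  rw [map_apply hg hs, bind_apply (hg hs) hκ.aemeasurable,
    bind_apply (f := fun a ↦ (κ a).map g) hs ((measurable_map g hg).comp hκ).aemeasurable]
  simp only [map_apply hg hs]

theorem bind_add (μ ν : Measure α) {κ : α → Measure β} (hκ : Measurable κ) :
    (μ + ν).bind κ = μ.bind κ + ν.bind κ := by
  ext s hs
  simp only [add_apply, bind_apply hs hκ.aemeasurable, lintegral_add_measure]

theorem bind_eq_map_bind_map (μ : Measure α) {κ : α → Measure δ} {κ' : β → Measure γ}
    (hκ' : Measurable κ') {F : α → β} (hF : Measurable F) {G : γ → δ} (hG : Measurable G)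
    (h : ∀ x, κ x = (κ' (F x)).map G) : μ.bind κ = ((μ.map F).bind κ').map G := by
  rw [bind_map_eq_bind_comp μ hF hκ', map_bind_eq_bind_map μ (hκ'.comp hF) hG]
  exact congrArg μ.bind (funext h)

end MeasureTheory.Measure

section PointCylinders

open MeasurableSpace

variable {ι α : Type*}

def pointCylinders (ι α : Type*) : Set (Set (ι → α)) :=
  {s | ∃ (K : Finset ι) (y : ι → α), s = {z | ∀ k ∈ K, z k = y k}}

theorem isPiSystem_pointCylinders : IsPiSystem (pointCylinders ι α) := by
  classical
  rintro _ ⟨K, y, rfl⟩ _ ⟨K', y', rfl⟩ ⟨w, hwy, hwy'⟩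
  refine ⟨K ∪ K', w, ?_⟩
  ext z
  simp only [Set.mem_inter_iff, Set.mem_ofPred_eq, Finset.mem_union]
  constructor
  · rintro ⟨hz, hz'⟩ k (hk | hk)
    · rw [hz k hk, hwy k hk]
    · rw [hz' k hk, hwy' k hk]
  · intro hz
    exact ⟨fun k hk ↦ (hz k (Or.inl hk)).trans (hwy k hk),
      fun k hk ↦ (hz k (Or.inr hk)).trans (hwy' k hk)⟩

theorem measurableSet_pointCylinder [MeasurableSpace α] [MeasurableSingletonClass α]
    (K : Finset ι) (y : ι → α) : MeasurableSet {z : ι → α | ∀ k ∈ K, z k = y k} := by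
  have : {z : ι → α | ∀ k ∈ K, z k = y k} = (K : Set ι).pi fun k ↦ {y k} := by
    ext z; simp
  rw [this]
  exact MeasurableSet.pi K.countable_toSet fun k _ ↦ measurableSet_singleton (y k)

theorem generateFrom_pointCylinders [MeasurableSpace α] [Countable α]
    [MeasurableSingletonClass α] : generateFrom (pointCylinders ι α) = MeasurableSpace.pi := by
  refine le_antisymm (generateFrom_le ?_) (iSup_le fun i ↦ ?_)
  · rintro _ ⟨K, y, rfl⟩
    exact measurableSet_pointCylinder K y
  · rintro _ ⟨t, -, rfl⟩
    have : (fun z : ι → α ↦ z i) ⁻¹' t =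
        ⋃ b ∈ t, {z | ∀ k ∈ ({i} : Finset ι), z k = b} := by
      ext z; simp
    rw [this]
    exact MeasurableSet.biUnion t.to_countable fun b _ ↦
      measurableSet_generateFrom ⟨{i}, fun _ ↦ b, rfl⟩

theorem MeasureTheory.Measure.ext_of_pointCylinders [MeasurableSpace α] [Countable α]
    [MeasurableSingletonClass α] [Nonempty α] {μ ν : Measure (ι → α)} [IsFiniteMeasure μ]
    (h : ∀ (K : Finset ι) (y : ι → α),
      μ {z | ∀ k ∈ K, z k = y k} = ν {z | ∀ k ∈ K, z k = y k}) :
    μ = ν := by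
  refine ext_of_generate_finite _ generateFrom_pointCylinders.symm isPiSystem_pointCylinders
    (by rintro _ ⟨K, y, rfl⟩; exact h K y) ?_
  simpa using h ∅ fun _ ↦ Classical.arbitrary α

end PointCylinders

theorem flipOdd_involutive : Function.Involutive flipOdd := by
  intro x; funext i; unfold flipOdd; split <;> simp

theorem flipEven_involutive : Function.Involutive flipEven := by
  intro x; funext i; unfold flipEven; split <;> simp

theorem measurable_flipOdd : Measurable flipOdd := by
  refine measurable_pi_lambda _ fun i ↦ ?_
  unfold flipOdd; split <;> fun_prop

theorem measurable_flipEven : Measurable flipEven := by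
  refine measurable_pi_lambda _ fun i ↦ ?_
  unfold flipEven; split <;> fun_prop

theorem flipOdd_apply_eq_iff (z y : ℤ → Bool) (k : ℤ) :
    flipOdd z k = y k ↔ z k = flipOdd y k := by
  unfold flipOdd; split <;> simp [Bool.not_eq_eq_eq_not]

theorem flipEven_apply_eq_iff (z y : ℤ → Bool) (k : ℤ) :
    flipEven z k = y k ↔ z k = flipEven y k := by
  unfold flipEven; split <;> simp [Bool.not_eq_eq_eq_not]

theorem finaeRule_not_center (a b c : Bool) : finaeRule a (!b) c = maj a b c := by
  revert a b c; decide

theorem finaeRule_not_sides (a b c : Bool) : finaeRule (!a) b (!c) = !maj a b c := by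
  revert a b c; decide

-- The weight `f(a,b,c)({out})` of the local rule of Majority(α); likewise `g` for FINAE(α).
def majorityTransition (α : ℝ) (a b c out : Bool) : ℝ≥0∞ :=
  ENNReal.ofReal
    (α * (if out = maj a b c then 1 else 0) + (1 - α) * (if out = !b then 1 else 0))

def finaeTransition (α : ℝ) (a b c out : Bool) : ℝ≥0∞ :=
  ENNReal.ofReal
    (α * (if out = finaeRule a b c then 1 else 0) + (1 - α) * (if out = b then 1 else 0))

theorem finaeTransition_not_center (α : ℝ) (a b c out : Bool) :
    finaeTransition α a (!b) c out = majorityTransition α a b c out := by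
  simp only [finaeTransition, majorityTransition, finaeRule_not_center]

theorem finaeTransition_not_sides (α : ℝ) (a b c out : Bool) :
    finaeTransition α (!a) b (!c) (!out) = majorityTransition α a b c out := by
  simp only [finaeTransition, majorityTransition, finaeRule_not_sides, Bool.not_not,
    Bool.not_eq_eq_eq_not]

theorem finaeTransition_flipEven_flipOdd (α : ℝ) (x y : ℤ → Bool) (k : ℤ) :
    finaeTransition α (flipEven x (k - 1)) (flipEven x k) (flipEven x (k + 1)) (flipOdd y k) =
      majorityTransition α (x (k - 1)) (x k) (x (k + 1)) (y k) := by
  have hk : (k - 1) % 2 = 1 - k % 2 ∧ (k + 1) % 2 = 1 - k % 2 := by omega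
  rcases Int.emod_two_eq k with h | h <;> simp only [flipEven, flipOdd, hk, h] <;> norm_num
  · exact finaeTransition_not_center α _ _ _ _
  · exact finaeTransition_not_sides α _ _ _ _

theorem finaeTransition_flipOdd_flipEven (α : ℝ) (x y : ℤ → Bool) (k : ℤ) :
    finaeTransition α (flipOdd x (k - 1)) (flipOdd x k) (flipOdd x (k + 1)) (flipEven y k) =
      majorityTransition α (x (k - 1)) (x k) (x (k + 1)) (y k) := by
  have hk : (k - 1) % 2 = 1 - k % 2 ∧ (k + 1) % 2 = 1 - k % 2 := by omega
  rcases Int.emod_two_eq k with h | h <;> simp only [flipEven, flipOdd, hk, h] <;> norm_num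
  · exact finaeTransition_not_sides α _ _ _ _
  · exact finaeTransition_not_center α _ _ _ _

theorem kernel_eq_map_of_transitions (α : ℝ)
    {κM κF : (ℤ → Bool) → Measure (ℤ → Bool)}
    (hκM : ∀ (x : ℤ → Bool) (K : Finset ℤ) (y : ℤ → Bool),
      κM x {z | ∀ k ∈ K, z k = y k} =
        ∏ k ∈ K, majorityTransition α (x (k - 1)) (x k) (x (k + 1)) (y k))
    (hκF : ∀ (x : ℤ → Bool) (K : Finset ℤ) (y : ℤ → Bool),
      κF x {z | ∀ k ∈ K, z k = y k} =
        ∏ k ∈ K, finaeTransition α (x (k - 1)) (x k) (x (k + 1)) (y k))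
    {F G : (ℤ → Bool) → ℤ → Bool} (hG : Measurable G)
    (hG_apply : ∀ z y k, G z k = y k ↔ z k = G y k)
    (h_local : ∀ x y k, finaeTransition α (F x (k - 1)) (F x k) (F x (k + 1)) (G y k) =
      majorityTransition α (x (k - 1)) (x k) (x (k + 1)) (y k))
    (x : ℤ → Bool) : κM x = (κF (F x)).map G := by
  -- the empty cylinder is the whole space, of mass the empty product `1`
  have : IsFiniteMeasure (κM x) := ⟨by simpa using (hκM x ∅ x).trans_lt ENNReal.one_lt_top⟩
  refine Measure.ext_of_pointCylinders fun K y ↦ ?_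
  have h_preimage : G ⁻¹' {z | ∀ k ∈ K, z k = y k} = {z | ∀ k ∈ K, z k = G y k} := by
    ext z; simp only [Set.mem_preimage, Set.mem_ofPred_eq, hG_apply]
  rw [Measure.map_apply hG (measurableSet_pointCylinder K y), h_preimage, hκM, hκF]
  exact Finset.prod_congr rfl fun k _ ↦ (h_local x y k).symm

theorem stmt14_general (α : ℝ)
    (κM κF : (ℤ → Bool) → Measure (ℤ → Bool))
    (hκMm : Measurable κM) (hκFm : Measurable κF)
    (hκM : ∀ (x : ℤ → Bool) (K : Finset ℤ) (y : ℤ → Bool),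
      κM x {z | ∀ k ∈ K, z k = y k} =
        ∏ k ∈ K, ENNReal.ofReal
          (α * (if y k = maj (x (k - 1)) (x k) (x (k + 1)) then 1 else 0)
            + (1 - α) * (if y k = ! x k then 1 else 0)))
    (hκF : ∀ (x : ℤ → Bool) (K : Finset ℤ) (y : ℤ → Bool),
      κF x {z | ∀ k ∈ K, z k = y k} =
        ∏ k ∈ K, ENNReal.ofReal
          (α * (if y k = finaeRule (x (k - 1)) (x k) (x (k + 1)) then 1 else 0)
            + (1 - α) * (if y k = x k then 1 else 0))) :
    (∀ μ : Measure (ℤ → Bool), IsProbabilityMeasure μ →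
      Measure.bind μ κM
        = Measure.map flipOdd (Measure.bind (Measure.map flipEven μ) κF)) ∧
    (∀ π : Measure (ℤ → Bool), IsProbabilityMeasure π → Measure.bind π κF = π →
      Measure.bind ((2 : ℝ≥0∞)⁻¹ • (Measure.map flipOdd π + Measure.map flipEven π)) κM
        = (2 : ℝ≥0∞)⁻¹ • (Measure.map flipOdd π + Measure.map flipEven π)) := by
  have conj_even : ∀ x, κM x = (κF (flipEven x)).map flipOdd :=
    kernel_eq_map_of_transitions α hκM hκF measurable_flipOdd flipOdd_apply_eq_iff
      (finaeTransition_flipEven_flipOdd α)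
  have conj_odd : ∀ x, κM x = (κF (flipOdd x)).map flipEven :=
    kernel_eq_map_of_transitions α hκM hκF measurable_flipEven flipEven_apply_eq_iff
      (finaeTransition_flipOdd_flipEven α)
  have bind_even (μ : Measure (ℤ → Bool)) :
      μ.bind κM = ((μ.map flipEven).bind κF).map flipOdd :=
    Measure.bind_eq_map_bind_map μ hκFm measurable_flipEven measurable_flipOdd conj_even
  have bind_odd (μ : Measure (ℤ → Bool)) :
      μ.bind κM = ((μ.map flipOdd).bind κF).map flipEven :=
    Measure.bind_eq_map_bind_map μ hκFm measurable_flipOdd measurable_flipEven conj_odd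
  refine ⟨fun μ _ ↦ bind_even μ, fun π _ hπ ↦ ?_⟩
  have swap_odd : (π.map flipOdd).bind κM = π.map flipEven := by
    rw [bind_odd, Measure.map_map measurable_flipOdd measurable_flipOdd,
      flipOdd_involutive.comp_self, Measure.map_id, hπ]
  have swap_even : (π.map flipEven).bind κM = π.map flipOdd := by
    rw [bind_even, Measure.map_map measurable_flipEven measurable_flipEven,
      flipEven_involutive.comp_self, Measure.map_id, hπ]
  rw [Measure.bind_smul, Measure.bind_add _ _ hκMm, swap_odd, swap_even, add_comm]

/-- The PCA Majority(α) on `{0,1}^ℤ` is conjugate to FINAE(α) via checkerboard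
bit flips: `Majority(α) = flip-odd ∘ FINAE(α) ∘ flip-even` as maps on
probability measures.  Consequently, if `π` is invariant for FINAE(α), then
`(flip-odd(π) + flip-even(π))/2` is invariant for Majority(α).  Here `κM` and
`κF` are the one-step kernels of Majority(α) and FINAE(α), characterized on
cylinders. -/
theorem stmt14 (α : ℝ) (hα0 : 0 < α) (hα1 : α < 1)
    (κM κF : (ℤ → Bool) → Measure (ℤ → Bool))
    (hκMm : Measurable κM) (hκFm : Measurable κF)
    (hκMprob : ∀ x, IsProbabilityMeasure (κM x))
    (hκFprob : ∀ x, IsProbabilityMeasure (κF x))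
    (hκM : ∀ (x : ℤ → Bool) (K : Finset ℤ) (y : ℤ → Bool),
      κM x {z | ∀ k ∈ K, z k = y k} =
        ∏ k ∈ K, ENNReal.ofReal
          (α * (if y k = maj (x (k - 1)) (x k) (x (k + 1)) then 1 else 0)
            + (1 - α) * (if y k = ! x k then 1 else 0)))
    (hκF : ∀ (x : ℤ → Bool) (K : Finset ℤ) (y : ℤ → Bool),
      κF x {z | ∀ k ∈ K, z k = y k} =
        ∏ k ∈ K, ENNReal.ofReal
          (α * (if y k = finaeRule (x (k - 1)) (x k) (x (k + 1)) then 1 else 0)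
            + (1 - α) * (if y k = x k then 1 else 0))) :
    (∀ μ : Measure (ℤ → Bool), IsProbabilityMeasure μ →
      Measure.bind μ κM
        = Measure.map flipOdd (Measure.bind (Measure.map flipEven μ) κF)) ∧
    (∀ π : Measure (ℤ → Bool), IsProbabilityMeasure π → Measure.bind π κF = π →
      Measure.bind ((2 : ℝ≥0∞)⁻¹ • (Measure.map flipOdd π + Measure.map flipEven π)) κM
        = (2 : ℝ≥0∞)⁻¹ • (Measure.map flipOdd π + Measure.map flipEven π)) :=
  stmt14_general α κM κF hκMm hκFm hκM hκF
end

section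
/- Let P be the PCA on {0,1}^Z of a given neighborhood V and transition function f, let D_n = {−n, …, n}, and let P(ν, D_n) be the finite non-homogeneous restriction of P to domain D_n with i.i.d. boundary of law ν_n. Suppose μ_n is an invariant measure of P(ν_n, D_n), extended to a measure μ̃_n on {0,1}^Z by fixing all cells outside the domain to a constant letter a. Then any weak accumulation point of the sequence (μ̃_n) is an invariant measure of P on {0,1}^Z. -/
open MeasureTheory Filter Topology Pointwise
open scoped ENNReal

/-!
Once `D_n` contains `K`, the restricted PCA and `P` give the cylinder `y_K` the same probability
from every configuration, and this probability is a bounded function of the finitely many cells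
of `K + V`. Hence invariance gives `μ_n(y_K) = ∫ P(x, y_K) dμ_n(x)` for large `n`, the right-hand
side is a finite combination of cylinder probabilities and so passes to the weak limit, and
cylinders determine a finite measure on `Bool^ℤ`.
-/

lemma Finset.restrict_surjective {ι : Type*} {π : ι → Type*} [∀ i, Nonempty (π i)]
    (S : Finset ι) : Function.Surjective (S.restrict (π := π)) := by
  classical
  intro w
  exact ⟨fun i => if h : i ∈ S then w ⟨i, h⟩ else Classical.arbitrary _,
    funext fun i => dif_pos i.2⟩

lemma Finset.restrict_preimage_singleton_restrict {ι α : Type*} (S : Finset ι) (y : ι → α) :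
    (S.restrict (π := fun _ => α)) ⁻¹' {S.restrict y} = {z | ∀ k ∈ S, z k = y k} := by
  ext z
  simp [funext_iff]

section Cylinders

variable {ι α : Type*}

lemma isPiSystem_setOf_forall_eq :
    IsPiSystem {s : Set (ι → α) | ∃ (K : Finset ι) (y : ι → α), s = {z | ∀ k ∈ K, z k = y k}} := by
  classical
  rintro _ ⟨K, y, rfl⟩ _ ⟨K', y', rfl⟩ ⟨x, hxy, hxy'⟩
  refine ⟨K ∪ K', x, Set.ext fun z => ?_⟩
  simp only [Set.mem_inter_iff, Set.mem_ofPred_eq, Finset.mem_union]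
  constructor
  · rintro ⟨hz, hz'⟩ k (hk | hk)
    · rw [hz k hk, hxy k hk]
    · rw [hz' k hk, hxy' k hk]
  · intro hz
    exact ⟨fun k hk => (hz k (.inl hk)).trans (hxy k hk),
      fun k hk => (hz k (.inr hk)).trans (hxy' k hk)⟩

variable [MeasurableSpace α]

lemma measurableSet_setOf_forall_eq [MeasurableSingletonClass α] (K : Finset ι) (y : ι → α) :
    MeasurableSet {z : ι → α | ∀ k ∈ K, z k = y k} :=
  MeasurableSet.pi K.countable_toSet fun k _ => measurableSet_singleton (y k)

lemma pi_eq_generateFrom_setOf_forall_eq [Countable α] [MeasurableSingletonClass α] :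
    (MeasurableSpace.pi : MeasurableSpace (ι → α)) = MeasurableSpace.generateFrom
      {s | ∃ (K : Finset ι) (y : ι → α), s = {z | ∀ k ∈ K, z k = y k}} := by
  refine le_antisymm (iSup_le fun k => ?_) (MeasurableSpace.generateFrom_le ?_)
  · rw [MeasurableSpace.comap_le_iff_le_map]
    intro A _
    have hA : (fun z : ι → α => z k) ⁻¹' A =
        ⋃ b ∈ A, {z : ι → α | ∀ j ∈ ({k} : Finset ι), z j = b} := by
      ext z; simp
    rw [MeasurableSpace.map_def, hA]
    exact MeasurableSet.biUnion A.to_countable fun b _ =>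
      MeasurableSpace.measurableSet_generateFrom ⟨{k}, fun _ => b, rfl⟩
  · rintro _ ⟨K, y, rfl⟩
    exact measurableSet_setOf_forall_eq K y

lemma MeasureTheory.Measure.ext_of_setOf_forall_eq [Countable α] [MeasurableSingletonClass α]
    {μ ν : Measure (ι → α)} [IsFiniteMeasure μ]
    (h : ∀ (K : Finset ι) (y : ι → α),
      μ {z | ∀ k ∈ K, z k = y k} = ν {z | ∀ k ∈ K, z k = y k}) :
    μ = ν := by
  refine ext_of_generate_finite _ pi_eq_generateFrom_setOf_forall_eq isPiSystem_setOf_forall_eq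
    (by rintro _ ⟨K, y, rfl⟩; exact h K y) ?_
  rcases isEmpty_or_nonempty (ι → α) with hempty | hne
  · simp [Set.univ_eq_empty_iff.mpr hempty]
  · simpa using h ∅ (Classical.arbitrary _)

variable [DecidableEq ι] [Fintype α] [MeasurableSingletonClass α]

lemma lintegral_comp_restrict_eq_sum (S : Finset ι) (g : (S → α) → ℝ≥0∞) (μ : Measure (ι → α)) :
    ∫⁻ x, g (S.restrict x) ∂μ = ∑ w, g w * μ (S.restrict ⁻¹' {w}) := by
  rw [← lintegral_map Measurable.of_discrete (Finset.measurable_restrict S), lintegral_fintype]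
  refine Finset.sum_congr rfl fun w _ => ?_
  rw [Measure.map_apply (Finset.measurable_restrict S) (measurableSet_singleton w)]

lemma tendsto_lintegral_of_dependsOn [Nonempty α] {β : Type*} {l : Filter β}
    {μs : β → Measure (ι → α)} {μ : Measure (ι → α)} {g : (ι → α) → ℝ≥0∞} {S : Finset ι}
    (hg : DependsOn g S) (hg_top : ∀ x, g x ≠ ∞)
    (hconv : ∀ y : ι → α, Tendsto (fun j => μs j {z | ∀ k ∈ S, z k = y k}) l
      (𝓝 (μ {z | ∀ k ∈ S, z k = y k}))) :
    Tendsto (fun j => ∫⁻ x, g x ∂μs j) l (𝓝 (∫⁻ x, g x ∂μ)) := by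
  set σ := Function.surjInv (S.restrict_surjective (π := fun _ => α))
  have hσ : ∀ w, S.restrict (σ w) = w := Function.surjInv_eq _
  have hsum : ∀ ν : Measure (ι → α),
      ∫⁻ x, g x ∂ν = ∑ w, g (σ w) * ν {z | ∀ k ∈ S, z k = σ w k} := by
    intro ν
    have hfac : ∀ x, g x = g (σ (S.restrict x)) := fun x =>
      hg fun i hi => (congrFun (hσ (S.restrict x)) ⟨i, hi⟩).symm
    rw [lintegral_congr hfac, lintegral_comp_restrict_eq_sum S fun w => g (σ w)]
    refine Finset.sum_congr rfl fun w _ => ?_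
    rw [← Finset.restrict_preimage_singleton_restrict, hσ]
  simp only [hsum]
  exact tendsto_finsetSum _ fun w _ => ENNReal.Tendsto.const_mul (hconv (σ w)) (.inr (hg_top _))

theorem bind_eq_self_of_tendsto_setOf_forall_eq [Nonempty α] {β : Type*} {l : Filter β}
    [l.NeBot] {μs : β → Measure (ι → α)} {κs : β → (ι → α) → Measure (ι → α)}
    {μ : Measure (ι → α)} [IsFiniteMeasure μ] {κ : (ι → α) → Measure (ι → α)}
    (hκ : Measurable κ) (hκs : ∀ j, Measurable (κs j)) (hinv : ∀ j, (μs j).bind (κs j) = μs j)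
    (hκ_local : ∀ (K : Finset ι) (y : ι → α),
      ∃ S : Finset ι, DependsOn (fun x => κ x {z | ∀ k ∈ K, z k = y k}) S)
    (hκ_top : ∀ (K : Finset ι) (y x : ι → α), κ x {z | ∀ k ∈ K, z k = y k} ≠ ∞)
    (hκs_eq : ∀ (K : Finset ι) (y : ι → α),
      ∀ᶠ j in l, ∀ x, κs j x {z | ∀ k ∈ K, z k = y k} = κ x {z | ∀ k ∈ K, z k = y k})
    (hconv : ∀ (K : Finset ι) (y : ι → α), Tendsto (fun j => μs j {z | ∀ k ∈ K, z k = y k}) l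
      (𝓝 (μ {z | ∀ k ∈ K, z k = y k}))) :
    μ.bind κ = μ := by
  refine (Measure.ext_of_setOf_forall_eq fun K y => ?_).symm
  have hC := measurableSet_setOf_forall_eq K y
  obtain ⟨S, hS⟩ := hκ_local K y
  have hμs : ∀ᶠ j in l,
      μs j {z | ∀ k ∈ K, z k = y k} = ∫⁻ x, κ x {z | ∀ k ∈ K, z k = y k} ∂μs j :=
    (hκs_eq K y).mono fun j hj => by
      rw [← lintegral_congr hj, ← Measure.bind_apply hC (hκs j).aemeasurable, hinv]
  rw [Measure.bind_apply hC hκ.aemeasurable]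
  refine tendsto_nhds_unique (hconv K y) ?_
  exact (tendsto_lintegral_of_dependsOn hS (hκ_top K y) (hconv S)).congr'
    (hμs.mono fun _ h => h.symm)

end Cylinders

lemma dependsOn_prod_comp_add {G α M : Type*} [Add G] [DecidableEq G] [CommMonoid M]
    (K V : Finset G) (F : G → (V → α) → M) :
    DependsOn (fun x : G → α => ∏ k ∈ K, F k fun v => x (k + v)) ↑(K + V) := fun _ _ h =>
  Finset.prod_congr rfl fun k hk =>
    congrArg (F k) (funext fun v => h _ (Finset.add_mem_add hk v.2))

lemma eventually_subset_Icc_neg (K : Finset ℤ) :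
    ∀ᶠ n : ℕ in atTop, K ⊆ Finset.Icc (-(n : ℤ)) n := by
  refine ((eventually_all_finset K).2 fun k _ => eventually_ge_atTop k.natAbs).mono
    fun n hn k hk => ?_
  have := hn k hk
  rw [Finset.mem_Icc]
  omega

theorem stmt16_general
    (V : Finset ℤ)
    (f : (V → Bool) → Bool → ℝ≥0∞)
    (ν : ℕ → Bool → ℝ≥0∞)
    (a : Bool)
    (κ : (ℤ → Bool) → Measure (ℤ → Bool)) (hκm : Measurable κ)
    (hκ : ∀ (x : ℤ → Bool) (K : Finset ℤ) (y : ℤ → Bool),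
      κ x {z | ∀ k ∈ K, z k = y k} = ∏ k ∈ K, f (fun v : V => x (k + v.1)) (y k))
    (κn : ℕ → (ℤ → Bool) → Measure (ℤ → Bool)) (hκnm : ∀ n, Measurable (κn n))
    (hκn : ∀ (n : ℕ) (x : ℤ → Bool) (K : Finset ℤ) (y : ℤ → Bool),
      κn n x {z | ∀ k ∈ K, z k = y k} =
        ∏ k ∈ K,
          (if k ∈ Finset.Icc (-(n:ℤ)) n then f (fun v : V => x (k + v.1)) (y k)
           else if k ∈ Finset.Icc (-(n:ℤ)) n ∪ (Finset.Icc (-(n:ℤ)) n + V) then ν n (y k)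
           else if y k = a then 1 else 0))
    (μ : ℕ → Measure (ℤ → Bool))
    (hinv : ∀ n, Measure.bind (μ n) (κn n) = μ n)
    (μlim : Measure (ℤ → Bool)) (hμlim : IsProbabilityMeasure μlim)
    (φ : ℕ → ℕ) (hφ : StrictMono φ)
    (hconv : ∀ (K : Finset ℤ) (y : ℤ → Bool),
      Tendsto (fun j => μ (φ j) {z | ∀ k ∈ K, z k = y k}) atTop
        (𝓝 (μlim {z | ∀ k ∈ K, z k = y k}))) :
    Measure.bind μlim κ = μlim := by
  have hκ_prob : ∀ x, IsProbabilityMeasure (κ x) := fun x => ⟨by simpa using hκ x ∅ x⟩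
  refine bind_eq_self_of_tendsto_setOf_forall_eq (μs := μ ∘ φ) (κs := κn ∘ φ) hκm
    (fun _ => hκnm _) (fun _ => hinv _) (fun K y => ⟨K + V, fun x x' hxx' => ?_⟩)
    (fun _ _ _ => measure_ne_top _ _) (fun K y => ?_) hconv
  · simp only [hκ]
    exact dependsOn_prod_comp_add K V (fun k w => f w (y k)) hxx'
  · filter_upwards [hφ.tendsto_atTop.eventually (eventually_subset_Icc_neg K)] with j hK x
    rw [Function.comp_apply, hκn, hκ]
    exact Finset.prod_congr rfl fun k hk => if_pos (hK hk)

/-- Any weak accumulation point (along cylinder probabilities) of invariant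
measures of the finite non-homogeneous restrictions `P(ν_n, D_n)` of a PCA `P`
on `{0,1}^ℤ` (with `D_n = {-n,…,n}`, i.i.d. boundary of law `ν_n`, and cells
outside `V̄(D_n)` frozen at the constant letter `a`) is an invariant measure of
`P` itself.  `κ` is the one-step kernel of `P` and `κn n` the kernel of the
`n`-th restriction, both characterized on cylinders. -/
theorem stmt16
    (V : Finset ℤ)
    (f : (V → Bool) → Bool → ℝ≥0∞) (hf : ∀ x, f x false + f x true = 1)
    (ν : ℕ → Bool → ℝ≥0∞) (hν : ∀ n, ν n false + ν n true = 1)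
    (a : Bool)
    (κ : (ℤ → Bool) → Measure (ℤ → Bool)) (hκm : Measurable κ)
    (hκ : ∀ (x : ℤ → Bool) (K : Finset ℤ) (y : ℤ → Bool),
      κ x {z | ∀ k ∈ K, z k = y k} = ∏ k ∈ K, f (fun v : V => x (k + v.1)) (y k))
    (κn : ℕ → (ℤ → Bool) → Measure (ℤ → Bool)) (hκnm : ∀ n, Measurable (κn n))
    (hκn : ∀ (n : ℕ) (x : ℤ → Bool) (K : Finset ℤ) (y : ℤ → Bool),
      κn n x {z | ∀ k ∈ K, z k = y k} =
        ∏ k ∈ K,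
          (if k ∈ Finset.Icc (-(n:ℤ)) n then f (fun v : V => x (k + v.1)) (y k)
           else if k ∈ Finset.Icc (-(n:ℤ)) n ∪ (Finset.Icc (-(n:ℤ)) n + V) then ν n (y k)
           else if y k = a then 1 else 0))
    (μ : ℕ → Measure (ℤ → Bool)) (hμprob : ∀ n, IsProbabilityMeasure (μ n))
    (hinv : ∀ n, Measure.bind (μ n) (κn n) = μ n)
    (hsupp : ∀ (n : ℕ) (k : ℤ),
      k ∉ Finset.Icc (-(n:ℤ)) n ∪ (Finset.Icc (-(n:ℤ)) n + V) → μ n {z | z k ≠ a} = 0)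
    (μlim : Measure (ℤ → Bool)) (hμlim : IsProbabilityMeasure μlim)
    (φ : ℕ → ℕ) (hφ : StrictMono φ)
    (hconv : ∀ (K : Finset ℤ) (y : ℤ → Bool),
      Tendsto (fun j => μ (φ j) {z | ∀ k ∈ K, z k = y k}) atTop
        (𝓝 (μlim {z | ∀ k ∈ K, z k = y k}))) :
    Measure.bind μlim κ = μlim :=
  stmt16_general V f ν a κ hκm hκ κn hκnm hκn μ hinv μlim hμlim φ hφ hconv
end
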